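/- arXiv:1204.5813 — 7 statements merged into one kernel-verified Lean document; each statement's English description precedes it below -/
import Mathlib

section
/- For all natural numbers n ≥ 1 and all real x, (1/n(n+1))·(x²-1)·L_n'(x) = (1/(2n+1))·(L_{n+1}(x) - L_{n-1}(x)), where L_n denotes the n-th Legendre polynomial. -/
open Polynomial

noncomputable def legendre : ℕ → Polynomial ℝ
  | 0 => 1
  | 1 => Polynomial.X
  | (n + 2) =>
      Polynomial.C ((2 * (n : ℝ) + 3) / ((n : ℝ) + 2)) * Polynomial.X * legendre (n + 1)
        - Polynomial.C (((n : ℝ) + 1) / ((n : ℝ) + 2)) * legendre n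

/-!
Differentiating the defining recurrence and using Bonnet's form
`(n + 1) P_{n+1} = (2n + 1) X P_n - n P_{n-1}` of it, a two-step induction gives
`(X² - 1) P_n' = n (X P_n - P_{n-1})`. Eliminating `X P_n` between these two identities yields the
polynomial identity `(2n + 1) (X² - 1) P_n' = n (n + 1) (P_{n+1} - P_{n-1})`, which is evaluated
at `x` and divided by `n (n + 1) (2n + 1) ≠ 0`.
-/

theorem legendre_add_two (n : ℕ) :
    ((n : ℝ[X]) + 2) * legendre (n + 2) =
      (2 * (n : ℝ[X]) + 3) * X * legendre (n + 1) - ((n : ℝ[X]) + 1) * legendre n := by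
  have hn : (n : ℝ) + 2 ≠ 0 := by positivity
  have hC : ∀ a : ℝ, ((n : ℝ[X]) + 2) * C (a / ((n : ℝ) + 2)) = C a := fun a => by
    rw [← C_eq_natCast, ← C_ofNat, ← C_add, ← C_mul, mul_div_cancel₀ _ hn]
  rw [legendre, mul_sub, ← mul_assoc, ← mul_assoc, ← mul_assoc, hC, hC]
  simp only [C_add, C_mul, C_eq_natCast, C_ofNat, C_1]

theorem succ_mul_legendre_succ (n : ℕ) :
    ((n : ℝ[X]) + 1) * legendre (n + 1) =
      (2 * (n : ℝ[X]) + 1) * X * legendre n - (n : ℝ[X]) * legendre (n - 1) := by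
  cases n with
  | zero => simp [legendre]
  | succ n =>
    rw [Nat.add_sub_cancel]
    push_cast
    linear_combination legendre_add_two n

theorem sq_sub_one_mul_derivative_legendre (n : ℕ) :
    (X ^ 2 - 1) * derivative (legendre n) =
      (n : ℝ[X]) * (X * legendre n - legendre (n - 1)) := by
  induction n using Nat.twoStepInduction with
  | zero => simp [legendre]
  | one => simp [legendre]; ring
  | more n ih₀ ih₁ =>
    have hn : (n : ℝ[X]) + 2 ≠ 0 := mod_cast (n + 1).succ_ne_zero
    have hderiv := congrArg derivative (legendre_add_two n)
    simp only [derivative_mul, derivative_sub, derivative_add, derivative_natCast,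
      derivative_ofNat, derivative_X, derivative_one] at hderiv
    refine mul_left_cancel₀ hn ?_
    rw [Nat.add_sub_cancel] at *
    push_cast at *
    linear_combination (X ^ 2 - 1) * hderiv + (2 * n + 3) * X * ih₁ - (n + 1) * ih₀
      + (n + 1) * succ_mul_legendre_succ n - (n + 2) * X * legendre_add_two n

theorem two_mul_add_one_mul_sq_sub_one_mul_derivative_legendre (n : ℕ) :
    (2 * (n : ℝ[X]) + 1) * ((X ^ 2 - 1) * derivative (legendre n)) =
      (n : ℝ[X]) * ((n : ℝ[X]) + 1) * (legendre (n + 1) - legendre (n - 1)) := by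
  linear_combination (2 * (n : ℝ[X]) + 1) * sq_sub_one_mul_derivative_legendre n
    - (n : ℝ[X]) * succ_mul_legendre_succ n

theorem stmt_5 (n : ℕ) (hn : 1 ≤ n) (x : ℝ) :
    (1 / ((n : ℝ) * ((n : ℝ) + 1))) * (x ^ 2 - 1) * ((derivative (legendre n)).eval x) =
      (1 / (2 * (n : ℝ) + 1)) * ((legendre (n + 1)).eval x - (legendre (n - 1)).eval x) := by
  have hn₀ : (n : ℝ) ≠ 0 := by positivity
  have h := congrArg (eval x) (two_mul_add_one_mul_sq_sub_one_mul_derivative_legendre n)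
  simp only [eval_mul, eval_add, eval_sub, eval_pow, eval_X, eval_natCast, eval_ofNat,
    eval_one] at h
  field_simp
  linear_combination h
end

section
/- For all natural numbers N ≥ 1, the maximum of |T_{N+1}'(x) + T_N'(x)| over x ∈ [-1,1] equals 2N² + 2N + 1, where T_n is the Chebyshev polynomial of the first kind. -/
/-!
Writing `x = cos θ`, one has `T_n'(x) = n U_{n-1}(x)` and `U_{n-1}(cos θ) sin θ = sin (n θ)`, so
`|sin (n θ)| ≤ n |sin θ|` gives Markov's bound `|T_n'| ≤ n²` on `[-1, 1]`, attained at `x = 1`.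
Hence `|T_{N+1}' + T_N'| ≤ (N + 1)² + N²` on `[-1, 1]`, with equality at `x = 1` where both
derivatives are positive.
-/

open Polynomial Polynomial.Chebyshev

theorem Real.abs_sin_nat_mul_le (n : ℕ) (θ : ℝ) : |Real.sin (n * θ)| ≤ n * |Real.sin θ| := by
  induction n with
  | zero => simp
  | succ n ih =>
    calc |Real.sin ((n + 1 : ℕ) * θ)|
        = |Real.sin (n * θ) * Real.cos θ + Real.cos (n * θ) * Real.sin θ| := by
          push_cast; rw [add_mul, one_mul, Real.sin_add]
      _ ≤ |Real.sin (n * θ)| * |Real.cos θ| + |Real.cos (n * θ)| * |Real.sin θ| := by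
          rw [← abs_mul, ← abs_mul]; exact abs_add_le _ _
      _ ≤ n * |Real.sin θ| * 1 + 1 * |Real.sin θ| := by
          gcongr <;> exact Real.abs_cos_le_one _
      _ = (n + 1 : ℕ) * |Real.sin θ| := by push_cast; ring

theorem Real.abs_sin_int_mul_le (k : ℤ) (θ : ℝ) :
    |Real.sin (k * θ)| ≤ |(k : ℝ)| * |Real.sin θ| := by
  obtain ⟨n, rfl | rfl⟩ := Int.eq_nat_or_neg k
  · simpa using Real.abs_sin_nat_mul_le n θ
  · simpa [neg_mul, Real.sin_neg] using Real.abs_sin_nat_mul_le n θ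

namespace Polynomial.Chebyshev

theorem abs_eval_U_real_le (n : ℤ) {x : ℝ} (hx : x ∈ Set.Icc (-1) 1) :
    |(U ℝ n).eval x| ≤ |(n : ℝ) + 1| := by
  have hclosed : IsClosed {y : ℝ | |(U ℝ n).eval y| ≤ |(n : ℝ) + 1|} :=
    isClosed_le (U ℝ n).continuous.abs continuous_const
  suffices Set.Ioo (-1) 1 ⊆ {y : ℝ | |(U ℝ n).eval y| ≤ |(n : ℝ) + 1|} by
    rw [← closure_Ioo (by norm_num : (-1 : ℝ) ≠ 1)] at hx
    exact closure_minimal this hclosed hx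
  intro y hy
  set θ := Real.arccos y
  have hsin : 0 < Real.sin θ :=
    Real.sin_pos_of_pos_of_lt_pi (Real.arccos_pos.2 hy.2) (Real.arccos_lt_pi.2 hy.1)
  have hU := U_real_cos θ n
  rw [Real.cos_arccos hy.1.le hy.2.le] at hU
  have hsin_mul := Real.abs_sin_int_mul_le (n + 1) θ
  push_cast at hsin_mul
  rw [← hU, abs_mul, abs_of_pos hsin] at hsin_mul
  exact le_of_mul_le_mul_right hsin_mul hsin

theorem abs_eval_derivative_T_real_le (n : ℤ) {x : ℝ} (hx : x ∈ Set.Icc (-1) 1) :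
    |(derivative (T ℝ n)).eval x| ≤ n ^ 2 := by
  rw [T_derivative_eq_U, eval_mul, eval_intCast, abs_mul, sq, ← abs_mul_abs_self (n : ℝ)]
  exact mul_le_mul_of_nonneg_left (by simpa using abs_eval_U_real_le (n - 1) hx) (abs_nonneg _)

end Polynomial.Chebyshev

theorem stmt_10_general (N : ℕ) :
    IsGreatest
      ((fun x : ℝ =>
        |(derivative (T ℝ (N + 1))).eval x + (derivative (T ℝ N)).eval x|) '' Set.Icc (-1) 1)
      (2 * (N : ℝ) ^ 2 + 2 * (N : ℝ) + 1) := by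
  have hsum : ((N + 1 : ℤ) : ℝ) ^ 2 + ((N : ℤ) : ℝ) ^ 2 = 2 * (N : ℝ) ^ 2 + 2 * (N : ℝ) + 1 := by
    push_cast; ring
  refine ⟨⟨1, by norm_num, ?_⟩, ?_⟩
  · dsimp only
    rw [derivative_T_eval_one, derivative_T_eval_one, ← hsum, abs_of_nonneg (by positivity)]
  · rintro _ ⟨x, hx, rfl⟩
    rw [← hsum]
    exact (abs_add_le _ _).trans
      (add_le_add (abs_eval_derivative_T_real_le _ hx) (abs_eval_derivative_T_real_le _ hx))

theorem stmt_10 (N : ℕ) (hN : 1 ≤ N) :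
    IsGreatest
      ((fun x : ℝ =>
        |(derivative (T ℝ (N + 1))).eval x + (derivative (T ℝ N)).eval x|) '' Set.Icc (-1) 1)
      (2 * (N : ℝ) ^ 2 + 2 * (N : ℝ) + 1) :=
  stmt_10_general N
end

section
/- For all natural numbers N ≥ 1, the maximum of |T_{N+1}''(x)| over x ∈ [-1,1] equals N(N+1)²(N+2)/3, where T_n is the Chebyshev polynomial of the first kind. -/
/-!
Every derivative of `T n` is a combination of Chebyshev polynomials `T m` with nonnegative
coefficients; as `|T m| ≤ 1 = T m 1` on `[-1, 1]`, its absolute value there is largest at `1`.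
The value at `1` comes from differentiating Chebyshev's equation
`(1 - x²) T'' - x T' + n² T = 0` once and setting `x = 1`: `3 T''(1) = (n² - 1) T'(1) = (n² - 1) n²`.
-/

open Polynomial Polynomial.Chebyshev

theorem isGreatest_abs_iterate_derivative_T_real (n : ℤ) (k : ℕ) :
    IsGreatest ((fun x : ℝ => |(derivative^[k] (T ℝ n)).eval x|) '' Set.Icc (-1) 1)
      ((derivative^[k] (T ℝ n)).eval 1) := by
  have hle {x : ℝ} (hx : x ∈ Set.Icc (-1) 1) := abs_iterate_derivative_T_real_le n k (abs_le.mpr hx)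
  refine ⟨⟨1, by simp, abs_of_nonneg ((abs_nonneg _).trans (hle (x := 1) (by simp)))⟩, ?_⟩
  rintro _ ⟨x, hx, rfl⟩
  exact hle hx

theorem derivative_derivative_T_eval_one {R : Type*} [CommRing R] (n : ℤ) :
    3 * (derivative (derivative (T R n))).eval 1 = n ^ 2 * (n ^ 2 - 1) := by
  have h := iterate_derivative_T_eval_one_recurrence (R := R) n 1
  simp only [Function.iterate_succ_apply', Function.iterate_zero_apply,
    derivative_T_eval_one] at h
  push_cast at h
  linear_combination h

theorem stmt_11_general (N : ℕ) :
    IsGreatest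
      ((fun x : ℝ => |(derivative (derivative (T ℝ (N + 1)))).eval x|) '' Set.Icc (-1) 1)
      ((N : ℝ) * ((N : ℝ) + 1) ^ 2 * ((N : ℝ) + 2) / 3) := by
  have hmax := isGreatest_abs_iterate_derivative_T_real (N + 1) 2
  simp only [Function.iterate_succ_apply', Function.iterate_zero_apply] at hmax
  have hval : (derivative (derivative (T ℝ (N + 1)))).eval 1 =
      (N : ℝ) * ((N : ℝ) + 1) ^ 2 * ((N : ℝ) + 2) / 3 := by
    linear_combination (norm := (push_cast; ring))
      derivative_derivative_T_eval_one (R := ℝ) (N + 1) / 3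
  rwa [hval] at hmax

theorem stmt_11 (N : ℕ) (hN : 1 ≤ N) :
    IsGreatest
      ((fun x : ℝ => |(derivative (derivative (T ℝ (N + 1)))).eval x|) '' Set.Icc (-1) 1)
      ((N : ℝ) * ((N : ℝ) + 1) ^ 2 * ((N : ℝ) + 2) / 3) :=
  stmt_11_general N
end

section
/- For all natural numbers N ≥ 1, the maximum of |T_{N+1}''(x) - T_{N-1}''(x)| over x ∈ [-1,1] equals (4/3)·N·(2N²+1), where T_n is the Chebyshev polynomial of the first kind. -/
/-!
Every derivative of `T_n` is a combination of `T_0, …, T_n` with nonnegative integer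
coefficients, and so is `T_{N+1}' - T_{N-1}' = 2(N-1) T_N + 2 U_N`. Since `|T_m| ≤ 1 = T_m(1)`
on `[-1, 1]`, a polynomial with nonnegative Chebyshev coefficients attains its maximal modulus
on `[-1, 1]` at `x = 1`, where the value follows from `T_n'(1) = n²` and
`3 U_n'(1) = n(n+1)(n+2)`.
-/

open Polynomial Polynomial.Chebyshev

namespace Polynomial.Chebyshev

variable (R : Type*) [CommRing R]

noncomputable def natSpanT : Submodule ℕ R[X] :=
  Submodule.span ℕ (Set.range fun m : ℕ => T R m)

variable {R}

theorem U_mem_natSpanT (n : ℕ) : U R n ∈ natSpanT R :=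
  Submodule.span_mono (Set.image_subset_range _ _) (U_mem_span_T R n)

theorem derivative_mem_natSpanT {P : R[X]} (hP : P ∈ natSpanT R) :
    derivative P ∈ natSpanT R := by
  induction hP using Submodule.span_induction with
  | mem _ hT =>
    obtain ⟨m, rfl⟩ := hT
    exact Submodule.span_mono (Set.image_subset_range _ _) (T_derivative_mem_span_T m)
  | zero => simp
  | add P Q _ _ hP hQ => rw [derivative_add]; exact add_mem hP hQ
  | smul n P _ hP => rw [map_nsmul]; exact Submodule.smul_mem _ n hP

theorem derivative_T_add_two_sub_derivative_T (n : ℤ) :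
    derivative (T R (n + 2)) - derivative (T R n) = 2 * n * T R (n + 1) + 2 * U R (n + 1) := by
  have hU := U_eq_two_mul_T_add_U R (n - 1)
  rw [show n - 1 + 2 = n + 1 by ring] at hU
  rw [T_derivative_eq_U, T_derivative_eq_U, show n + 2 - 1 = n + 1 by ring, hU]
  push_cast
  ring

theorem derivative_T_add_two_sub_derivative_T_mem_natSpanT (n : ℕ) :
    derivative (T R (n + 2)) - derivative (T R n) ∈ natSpanT R := by
  rw [derivative_T_add_two_sub_derivative_T]
  have hT : T R ((n : ℤ) + 1) ∈ natSpanT R :=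
    Submodule.subset_span ⟨n + 1, by push_cast; rfl⟩
  have hU : U R ((n : ℤ) + 1) ∈ natSpanT R := by exact_mod_cast U_mem_natSpanT (n + 1)
  convert add_mem (Submodule.smul_mem _ (2 * n) hT) (Submodule.smul_mem _ 2 hU) using 2 <;>
    simp [nsmul_eq_mul]

theorem abs_eval_le_eval_one_of_mem_natSpanT {P : ℝ[X]} (hP : P ∈ natSpanT ℝ) {x : ℝ}
    (hx : |x| ≤ 1) : |P.eval x| ≤ P.eval 1 := by
  induction hP using Submodule.span_induction with
  | mem _ hT =>
    obtain ⟨m, rfl⟩ := hT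
    rw [T_eval_one]
    exact abs_eval_T_real_le_one m hx
  | zero => simp
  | add P Q _ _ hP hQ => rw [eval_add, eval_add]; exact (abs_add_le _ _).trans (add_le_add hP hQ)
  | smul n P _ hP => rw [eval_smul, eval_smul, abs_nsmul]; exact nsmul_le_nsmul_right hP n

theorem isGreatest_abs_eval_image_Icc_of_mem_natSpanT {P : ℝ[X]} (hP : P ∈ natSpanT ℝ) :
    IsGreatest ((fun x => |P.eval x|) '' Set.Icc (-1) 1) (P.eval 1) := by
  have hle : ∀ x ∈ Set.Icc (-1 : ℝ) 1, |P.eval x| ≤ P.eval 1 := fun x hx =>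
    abs_eval_le_eval_one_of_mem_natSpanT hP (abs_le.mpr hx)
  refine ⟨⟨1, by norm_num, abs_of_nonneg ?_⟩, ?_⟩
  · exact (abs_nonneg _).trans (hle 1 (by norm_num))
  · rintro _ ⟨x, hx, rfl⟩
    exact hle x hx

theorem three_mul_eval_one_derivative_derivative_T_add_two_sub (n : ℤ) :
    3 * (derivative (derivative (T R (n + 2))) - derivative (derivative (T R n))).eval 1 =
      4 * (n + 1) * (2 * (n + 1) ^ 2 + 1) := by
  have hU := derivative_U_eval_one (R := R) (n + 1)
  rw [← derivative_sub, derivative_T_add_two_sub_derivative_T]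
  simp only [derivative_add, derivative_mul, derivative_ofNat, derivative_intCast, zero_mul,
    zero_add, eval_add, eval_mul, eval_ofNat, eval_intCast, derivative_T_eval_one, mul_zero,
    add_zero]
  push_cast at hU ⊢
  linear_combination 2 * hU

end Polynomial.Chebyshev

theorem stmt_12 (N : ℕ) (hN : 1 ≤ N) :
    IsGreatest
      ((fun x : ℝ =>
        |(derivative (derivative (T ℝ (N + 1)))).eval x -
          (derivative (derivative (T ℝ ((N : ℤ) - 1)))).eval x|) '' Set.Icc (-1) 1)
      ((4 / 3 : ℝ) * (N : ℝ) * (2 * (N : ℝ) ^ 2 + 1)) := by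
  obtain ⟨n, rfl⟩ := Nat.exists_eq_add_of_le' hN
  have hmem :=
    derivative_mem_natSpanT (derivative_T_add_two_sub_derivative_T_mem_natSpanT (R := ℝ) n)
  have hval := three_mul_eval_one_derivative_derivative_T_add_two_sub (R := ℝ) n
  rw [derivative_sub] at hmem
  convert isGreatest_abs_eval_image_Icc_of_mem_natSpanT hmem using 1
  · push_cast
    simp only [eval_sub, add_assoc, one_add_one_eq_two, add_sub_cancel_right]
  · push_cast at hval ⊢
    linarith
end

section
/- Let ρ > 1 and z = (ρe^{iθ} + ρ^{-1}e^{-iθ})/2 be on the Bernstein ellipse E_ρ. Then |T_{N+1}(z) - T_{N-1}(z)| = (1/2)·√(ρ² + ρ^{-2} - 2cos 2θ)·√(ρ^{2N} + ρ^{-2N} - 2cos 2Nθ). -/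
/-!
Writing `z = (w + w⁻¹) / 2` with `w = ρ e^{iθ}`, Chebyshev polynomials become
`2 T_n(z) = w^n + w^{-n}`, so the three-term recurrence gives the factorization
`T_{N+1}(z) - T_{N-1}(z) = (w - w⁻¹)(w^N - w^{-N}) / 2`. Since `w^N = ρ^N e^{iNθ}`, both factors
have modulus `|r e^{iφ} - r⁻¹ e^{-iφ}| = √(r² + r⁻² - 2 cos 2φ)`.
-/

open Polynomial Polynomial.Chebyshev

theorem two_mul_T_eval_of_mul_eq_one {R : Type*} [CommRing R] {a b x : R} (hab : a * b = 1)
    (hx : 2 * x = a + b) (n : ℕ) : 2 * (T R n).eval x = a ^ n + b ^ n := by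
  have h := congrArg (eval x) (C_comp_two_mul_X R n)
  rw [eval_comp, eval_mul, eval_mul, eval_X, eval_ofNat] at h
  rw [← h, hx, ← dickson_one_one_eq_chebyshev_C, dickson_one_one_eval_add_inv a b hab]

theorem two_mul_T_eval_add_one_sub_T_eval_sub_one {R : Type*} [CommRing R] {a b x : R}
    (hab : a * b = 1) (hx : 2 * x = a + b) (n : ℕ) :
    2 * ((T R (n + 1)).eval x - (T R (n - 1)).eval x) = (a - b) * (a ^ n - b ^ n) := by
  have hn := two_mul_T_eval_of_mul_eq_one hab hx n
  have hn1 := two_mul_T_eval_of_mul_eq_one hab hx (n + 1)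
  push_cast at hn1
  rw [T_sub_one, eval_sub, eval_mul, eval_mul, eval_X, eval_ofNat]
  linear_combination 2 * hn1 - 2 * x * hn - (a ^ n + b ^ n) * hx

theorem Complex.norm_ofReal_mul_exp_sub_inv (ρ θ : ℝ) (hρ : ρ ≠ 0) :
    ‖ρ * exp (θ * I) - (ρ * exp (θ * I))⁻¹‖ = √(ρ ^ 2 + ρ⁻¹ ^ 2 - 2 * Real.cos (2 * θ)) := by
  rw [norm_def, normSq_apply, mul_inv, ← exp_neg, ← neg_mul, ← ofReal_inv, ← ofReal_neg]
  congr 1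
  simp only [sub_re, sub_im, re_ofReal_mul, im_ofReal_mul, exp_ofReal_mul_I_re,
    exp_ofReal_mul_I_im, Real.cos_neg, Real.sin_neg, Real.cos_two_mul, Real.cos_sq']
  field_simp
  linear_combination (1 - ρ ^ 2) ^ 2 * Real.cos_sq_add_sin_sq θ

theorem Complex.norm_ofReal_mul_exp_pow_sub_inv (ρ θ : ℝ) (hρ : ρ ≠ 0) (n : ℕ) :
    ‖(ρ * exp (θ * I)) ^ n - ((ρ * exp (θ * I)) ^ n)⁻¹‖ =
      √(ρ ^ (2 * n) + ρ⁻¹ ^ (2 * n) - 2 * Real.cos (2 * n * θ)) := by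
  have h : (ρ * exp (θ * I)) ^ n = ((ρ ^ n : ℝ) : ℂ) * exp ((n * θ : ℝ) * I) := by
    rw [mul_pow, ← exp_nat_mul]
    push_cast
    ring_nf
  rw [h, norm_ofReal_mul_exp_sub_inv _ _ (pow_ne_zero n hρ)]
  ring_nf

theorem stmt_14_general (N : ℕ) (ρ θ : ℝ) (hρ : 1 < ρ) (z : ℂ)
    (hz : z = ((ρ : ℂ) * Complex.exp (θ * Complex.I) +
      (ρ : ℂ)⁻¹ * Complex.exp (-(θ * Complex.I))) / 2) :
    ‖(T ℂ (N + 1)).eval z - (T ℂ ((N : ℤ) - 1)).eval z‖ =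
      (1 / 2) * Real.sqrt (ρ ^ 2 + ρ⁻¹ ^ 2 - 2 * Real.cos (2 * θ)) *
        Real.sqrt (ρ ^ (2 * N) + ρ⁻¹ ^ (2 * N) - 2 * Real.cos (2 * (N : ℝ) * θ)) := by
  have hρ0 : ρ ≠ 0 := (zero_lt_one.trans hρ).ne'
  set w : ℂ := ρ * Complex.exp (θ * Complex.I)
  have hw : w * w⁻¹ = 1 :=
    mul_inv_cancel₀ (mul_ne_zero (by exact_mod_cast hρ0) (Complex.exp_ne_zero _))
  have hzw : 2 * z = w + w⁻¹ := by rw [hz, mul_inv, ← Complex.exp_neg]; ring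
  have hdiff : (T ℂ (N + 1)).eval z - (T ℂ ((N : ℤ) - 1)).eval z =
      (w - w⁻¹) * (w ^ N - (w ^ N)⁻¹) / 2 := by
    rw [← inv_pow, ← two_mul_T_eval_add_one_sub_T_eval_sub_one hw hzw N]
    ring
  rw [hdiff, norm_div, norm_mul, Complex.norm_two, Complex.norm_ofReal_mul_exp_sub_inv ρ θ hρ0,
    Complex.norm_ofReal_mul_exp_pow_sub_inv ρ θ hρ0]
  ring

theorem stmt_14 (N : ℕ) (hN : 1 ≤ N) (ρ θ : ℝ) (hρ : 1 < ρ) (z : ℂ)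
    (hz : z = ((ρ : ℂ) * Complex.exp (θ * Complex.I) +
      (ρ : ℂ)⁻¹ * Complex.exp (-(θ * Complex.I))) / 2) :
    ‖(T ℂ (N + 1)).eval z - (T ℂ ((N : ℤ) - 1)).eval z‖ =
      (1 / 2) * Real.sqrt (ρ ^ 2 + ρ⁻¹ ^ 2 - 2 * Real.cos (2 * θ)) *
        Real.sqrt (ρ ^ (2 * N) + ρ⁻¹ ^ (2 * N) - 2 * Real.cos (2 * (N : ℝ) * θ)) :=
  stmt_14_general N ρ θ hρ z hz
end

section
/- For all ρ > 1, natural numbers N ≥ 1, and points z on the Bernstein ellipse E_ρ, we have |T_{N+1}(z) - T_{N-1}(z)| ≥ (1/2)·(ρ - ρ^{-1})·(ρ^N - ρ^{-N}). -/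
/-!
Writing the point of the ellipse as `z = cos u` with `u = θ - i log ρ` gives `T_n(z) = cos (n u)`,
hence `T_{N+1}(z) - T_{N-1}(z) = -2 sin (N u) sin u`. Since
`|sin w|² = sin² (Re w) + sinh² (Im w) ≥ sinh² (Im w)` and `2 sinh (N log ρ) = ρ^N - ρ^{-N}`,
the two sine factors are bounded below by `(ρ - ρ⁻¹)/2` and `(ρ^N - ρ^{-N})/2`.
-/

open Polynomial Polynomial.Chebyshev

open Complex in
theorem Complex.abs_sinh_im_le_norm_sin (w : ℂ) : |Real.sinh w.im| ≤ ‖sin w‖ := by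
  have hsin : sin w = (Real.sin w.re * Real.cosh w.im : ℝ) +
      (Real.cos w.re * Real.sinh w.im : ℝ) * I := by
    conv_lhs => rw [← re_add_im w, sin_add_mul_I]
    push_cast
    ring
  have hnormSq : ‖sin w‖ ^ 2 = Real.sin w.re ^ 2 + Real.sinh w.im ^ 2 := by
    rw [Complex.sq_norm, hsin, normSq_add_mul_I]
    linear_combination Real.sinh w.im ^ 2 * Real.sin_sq_add_cos_sq w.re +
      Real.sin w.re ^ 2 * Real.cosh_sq w.im
  exact abs_le_of_sq_le_sq (hnormSq ▸ le_add_of_nonneg_left (sq_nonneg _)) (norm_nonneg _)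

theorem Real.two_mul_sinh_nat_mul_log {ρ : ℝ} (hρ : 0 < ρ) (n : ℕ) :
    2 * Real.sinh (n * Real.log ρ) = ρ ^ n - ρ⁻¹ ^ n := by
  rw [Real.sinh_eq, Real.exp_neg, Real.exp_nat_mul, Real.exp_log hρ, inv_pow]
  ring

open Complex in
theorem Complex.bernstein_ellipse_eq_cos {ρ : ℝ} (hρ : 0 < ρ) (θ : ℝ) :
    ((ρ : ℂ) * exp (θ * I) + (ρ : ℂ)⁻¹ * exp (-(θ * I))) / 2 =
      cos (θ - Real.log ρ * I) := by
  have hexp : exp (Real.log ρ) = ρ := by rw [← ofReal_exp, Real.exp_log hρ]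
  have h₁ : (θ - Real.log ρ * I) * I = θ * I + Real.log ρ := by ring_nf; rw [I_sq]; ring
  have h₂ : -(θ - Real.log ρ * I) * I = -(θ * I) - Real.log ρ := by ring_nf; rw [I_sq]; ring
  rw [cos, h₁, h₂, exp_add, exp_sub, hexp]
  field_simp

open Complex in
theorem Polynomial.Chebyshev.T_complex_cos_add_one_sub_T_complex_cos_sub_one (n : ℤ) (u : ℂ) :
    (T ℂ (n + 1)).eval (cos u) - (T ℂ (n - 1)).eval (cos u) = -2 * sin (n * u) * sin u := by
  rw [T_complex_cos, T_complex_cos, cos_sub_cos]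
  push_cast
  ring_nf

theorem stmt_16_general (N : ℕ) (ρ : ℝ) (hρ : 1 < ρ) (z : ℂ)
    (hz : ∃ θ ∈ Set.Icc (0 : ℝ) (2 * Real.pi),
      z = ((ρ : ℂ) * Complex.exp (θ * Complex.I) +
        (ρ : ℂ)⁻¹ * Complex.exp (-(θ * Complex.I))) / 2) :
    (1 / 2) * (ρ - ρ⁻¹) * (ρ ^ N - ρ⁻¹ ^ N) ≤
      ‖(T ℂ (N + 1)).eval z - (T ℂ ((N : ℤ) - 1)).eval z‖ := by
  obtain ⟨θ, -, rfl⟩ := hz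
  have hρ₀ : 0 < ρ := zero_lt_one.trans hρ
  set L := Real.log ρ
  set u : ℂ := θ - L * Complex.I
  have hu : u.im = -L := by simp [u]
  have hNu : ((N : ℂ) * u).im = -(N * L) := by simp [u]
  rw [Complex.bernstein_ellipse_eq_cos hρ₀,
    T_complex_cos_add_one_sub_T_complex_cos_sub_one]
  calc (1 / 2) * (ρ - ρ⁻¹) * (ρ ^ N - ρ⁻¹ ^ N)
      = 2 * (Real.sinh L * Real.sinh (N * L)) := by
        have h₁ := Real.two_mul_sinh_nat_mul_log hρ₀ 1
        rw [Nat.cast_one, one_mul, pow_one, pow_one] at h₁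
        rw [← h₁, ← Real.two_mul_sinh_nat_mul_log hρ₀]
        ring
    _ ≤ 2 * (|Real.sinh u.im| * |Real.sinh ((N : ℂ) * u).im|) := by
        rw [hu, hNu, Real.sinh_neg, Real.sinh_neg, abs_neg, abs_neg, ← abs_mul]
        gcongr
        exact le_abs_self _
    _ ≤ 2 * (‖Complex.sin u‖ * ‖Complex.sin ((N : ℂ) * u)‖) := by
        gcongr <;> exact Complex.abs_sinh_im_le_norm_sin _
    _ = ‖-2 * Complex.sin ((N : ℤ) * u) * Complex.sin u‖ := by
        rw [norm_mul, norm_mul, norm_neg, Complex.norm_two]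
        push_cast
        ring

theorem stmt_16 (N : ℕ) (hN : 1 ≤ N) (ρ : ℝ) (hρ : 1 < ρ) (z : ℂ)
    (hz : ∃ θ ∈ Set.Icc (0 : ℝ) (2 * Real.pi),
      z = ((ρ : ℂ) * Complex.exp (θ * Complex.I) +
        (ρ : ℂ)⁻¹ * Complex.exp (-(θ * Complex.I))) / 2) :
    (1 / 2) * (ρ - ρ⁻¹) * (ρ ^ N - ρ⁻¹ ^ N) ≤
      ‖(T ℂ (N + 1)).eval z - (T ℂ ((N : ℤ) - 1)).eval z‖ :=
  stmt_16_general N ρ hρ z hz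
end

section
/- Let N ≥ 2 and let u ∈ P_{N+1} and u_N ∈ P_N be real polynomials with u_N(-1) = u(-1) and u_N' agreeing with u' at the N roots of the Chebyshev polynomial T_N. Then there exists a constant c such that u(x) - u_N(x) = c·[ (N/(N²-1))·(x²-1)·U_{N-1}(x) - (x·T_N(x) + (-1)^N)/(N²-1) ] for all x. -/
/-!
The collocation conditions say that `(u - u_N)'`, a polynomial of degree at most `N`, vanishes at
the `N` simple roots of `T_N`, so it is a multiple `c T_N`. An antiderivative of `(N² - 1) T_N` is
`N (x² - 1) U_{N-1} - x T_N` (use `(x² - 1) U_{N-1} = T_{N+1} - x T_N` and `T_N = U_N - x U_{N-1}`);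
subtracting `(-1)^N = T_N(-1)` makes it vanish at `-1`, and `u - u_N` is determined by its
derivative and its value at `-1`.
-/
open Polynomial Polynomial.Chebyshev

namespace Polynomial

theorem eq_of_derivative_eq_of_eval_eq {R : Type*} [Ring R] [IsAddTorsionFree R]
    {p q : R[X]} (a : R) (hd : derivative p = derivative q) (ha : p.eval a = q.eval a) :
    p = q := by
  have hconst := eq_C_of_derivative_eq_zero (p := p - q) (by rw [derivative_sub, hd, sub_self])
  have hzero : (p - q).coeff 0 = 0 := by
    simpa [ha] using (congrArg (eval a) hconst).symm
  rw [hzero, map_zero, sub_eq_zero] at hconst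
  exact hconst

theorem exists_eq_C_mul_of_isRoot_of_natDegree_le {K : Type*} [Field K] {f g : K[X]}
    (hf : f.Splits) (hf0 : f ≠ 0) (hnodup : f.roots.Nodup) (hdeg : g.natDegree ≤ f.natDegree)
    (hroot : ∀ x, f.IsRoot x → g.IsRoot x) : ∃ c, g = C c * f := by
  rcases eq_or_ne g 0 with rfl | hg0
  · exact ⟨0, by simp⟩
  obtain ⟨r, rfl⟩ : f ∣ g := hf.dvd_of_roots_le_roots hf0 <|
    (Multiset.le_iff_subset hnodup).mpr fun x hx ↦
      (mem_roots hg0).mpr (hroot x (isRoot_of_mem_roots hx))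
  rw [natDegree_mul hf0 (right_ne_zero_of_mul hg0)] at hdeg
  exact ⟨r.coeff 0, by rw [mul_comm, ← eq_C_of_natDegree_eq_zero (by omega)]⟩

namespace Chebyshev

theorem splits_T_real (n : ℕ) : (T ℝ n).Splits := by
  rcases eq_or_ne n 0 with rfl | hn
  · simp
  refine splits_iff_card_roots.mpr ?_
  rw [roots_T_real, Finset.card_val, Finset.card_image_of_injOn, Finset.card_range, natDegree_T,
    Int.natAbs_natCast]
  exact (Finset.range n).nodup_map_iff_injOn.mp (roots_T_real_nodup n)

theorem nodup_roots_T_real (n : ℕ) : (T ℝ n).roots.Nodup := by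
  rw [roots_T_real]
  exact Finset.nodup _

variable {R : Type*} [CommRing R]

theorem X_sq_sub_one_mul_U_sub_one (n : ℤ) :
    (X ^ 2 - 1) * U R (n - 1) = T R (n + 1) - X * T R n := by
  linear_combination (norm := ring_nf) -(one_sub_X_sq_mul_U_eq_pol_in_T R (n - 1))

theorem derivative_intCast_mul_X_sq_sub_one_mul_U_sub_X_mul_T (n : ℤ) :
    derivative ((n : R[X]) * (X ^ 2 - 1) * U R (n - 1) - X * T R n) =
      ((n : R[X]) ^ 2 - 1) * T R n := by
  rw [mul_assoc, X_sq_sub_one_mul_U_sub_one]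
  simp only [derivative_sub, derivative_mul, derivative_intCast, derivative_X, T_derivative_eq_U,
    zero_mul, zero_add, one_mul, add_sub_cancel_right, Int.cast_add, Int.cast_one]
  linear_combination (-(n : R[X]) * (n + 1)) * T_eq_U_sub_X_mul_U R n

end Chebyshev

end Polynomial

theorem stmt_19 (N : ℕ) (hN : 2 ≤ N) (u uN : Polynomial ℝ)
    (hu : u.natDegree ≤ N + 1) (huN : uN.natDegree ≤ N)
    (hinit : uN.eval (-1) = u.eval (-1))
    (hcol : ∀ x : ℝ, (T ℝ N).eval x = 0 →
      (derivative uN).eval x = (derivative u).eval x) :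
    ∃ c : ℝ, ∀ x : ℝ,
      u.eval x - uN.eval x =
        c * (((N : ℝ) / ((N : ℝ) ^ 2 - 1)) * (x ^ 2 - 1) * (U ℝ ((N : ℤ) - 1)).eval x
          - (x * (T ℝ N).eval x + (-1 : ℝ) ^ N) / ((N : ℝ) ^ 2 - 1)) := by
  have hN2 : (N : ℝ) ^ 2 - 1 ≠ 0 := by
    have : (2 : ℝ) ≤ N := by exact_mod_cast hN
    nlinarith
  have hdeg : (derivative (u - uN)).natDegree ≤ (T ℝ N).natDegree := by
    have := natDegree_derivative_le (u - uN)
    have := natDegree_sub_le u uN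
    simp only [natDegree_T, Int.natAbs_natCast]
    omega
  obtain ⟨c, hc⟩ := exists_eq_C_mul_of_isRoot_of_natDegree_le (splits_T_real N)
    (T_ne_zero ℝ N) (nodup_roots_T_real N) hdeg fun x hx ↦ by
      simp [IsRoot, hcol x hx]
  set W : ℝ[X] := ((N : ℤ) : ℝ[X]) * (X ^ 2 - 1) * U ℝ (N - 1) - X * T ℝ N - C ((-1) ^ N)
  have hW : u - uN = C (c / ((N : ℝ) ^ 2 - 1)) * W := by
    refine eq_of_derivative_eq_of_eval_eq (-1) ?_ ?_
    · rw [hc, derivative_mul, derivative_C, zero_mul, zero_add, derivative_sub, derivative_C,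
        sub_zero, derivative_intCast_mul_X_sq_sub_one_mul_U_sub_X_mul_T, ← mul_assoc,
        show ((N : ℤ) : ℝ[X]) ^ 2 - 1 = C ((N : ℝ) ^ 2 - 1) by simp, ← Polynomial.C_mul,
        div_mul_cancel₀ _ hN2]
    · simp [W, hinit]
  refine ⟨c, fun x ↦ ?_⟩
  have hx := congrArg (eval x) hW
  simp only [W, eval_sub, eval_mul, eval_C, eval_pow, eval_X, eval_one, Int.cast_natCast,
    eval_natCast] at hx
  rw [hx]
  field_simp
  ring
end
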